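/- arXiv:0911.4430 — 5 statements merged into one kernel-verified Lean document; each statement's English description precedes it below -/
import Mathlib

section
/- For every 4-tuple of distinct indices i₁, i₂, i₃, i₄ ∈ {0, 1, …, n}, the cyclic Arnold relation holds: Σ_{σ ∈ A₄} α_{i_{σ(1)} i_{σ(2)}} · α_{i_{σ(2)} i_{σ(3)}} = 0, where A₄ is the alternating group on {1,2,3,4}. -/
/-!
Put `η₀ = 0` and `ω₀ᵢ = ωᵢ₀ = 0`. Then `α_ab = η_a + η_b - 2ω_ab` for all distinct
`a, b ∈ {0, …, n}`, and the anticommutation and Arnold relations still hold. Grouping `A₄` by the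
omitted letter `σ(4)` splits the sum into the cyclic sums `α_ab α_bc + α_bc α_ca + α_ca α_ab` over
the four faces of the tetrahedron `i₁i₂i₃i₄`, oriented as its boundary. Modulo anticommutation and
the Arnold relation, each cyclic sum equals `Ψ_ab + Ψ_bc + Ψ_ca` for the antisymmetric
`Ψ_ab = η_a η_b - 2 (η_a - η_b) ω_ab`, so the sum over the boundary cancels.
-/
open Finset Equiv Function

theorem sum_even_perm_fin_four {M : Type*} [AddCommMonoid M] (f : Fin 4 → Fin 4 → Fin 4 → M) :
    ∑ σ ∈ univ.filter (fun σ : Perm (Fin 4) => Perm.sign σ = 1), f (σ 0) (σ 1) (σ 2) =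
      (f 0 1 2 + f 1 2 0 + f 2 0 1) + (f 1 0 3 + f 0 3 1 + f 3 1 0) +
        (f 0 2 3 + f 2 3 0 + f 3 0 2) + (f 1 3 2 + f 3 2 1 + f 2 1 3) := by
  have h_alternating : univ.filter (fun σ : Perm (Fin 4) => Perm.sign σ = 1) =
      {1, swap 0 1 * swap 1 2, swap 0 2 * swap 2 1, swap 0 1 * swap 1 3, swap 0 3 * swap 3 1,
        swap 0 2 * swap 2 3, swap 0 3 * swap 3 2, swap 1 2 * swap 2 3, swap 1 3 * swap 3 2,
        swap 0 1 * swap 2 3, swap 0 2 * swap 1 3, swap 0 3 * swap 1 2} := by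
    decide
  rw [h_alternating]
  simp (disch := decide) only [Finset.sum_insert, Finset.sum_singleton]
  simp only [Perm.coe_one, id_eq, Perm.mul_apply, swap_apply_def, Fin.reduceEq, ↓reduceIte]
  abel

theorem sum_even_perm_fin_four_eq_zero {G : Type*} [AddCommGroup G]
    (f : Fin 4 → Fin 4 → Fin 4 → G) (Φ : Fin 4 → Fin 4 → G) (hΦ : ∀ a b, a ≠ b → Φ b a = -Φ a b)
    (hf : ∀ a b c, a ≠ b → b ≠ c → a ≠ c → f a b c + f b c a + f c a b = Φ a b + Φ b c + Φ c a) :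
    ∑ σ ∈ univ.filter (fun σ : Perm (Fin 4) => Perm.sign σ = 1), f (σ 0) (σ 1) (σ 2) = 0 := by
  rw [sum_even_perm_fin_four, hf 0 1 2 (by decide) (by decide) (by decide),
    hf 1 0 3 (by decide) (by decide) (by decide), hf 0 2 3 (by decide) (by decide) (by decide),
    hf 1 3 2 (by decide) (by decide) (by decide), hΦ 0 1 (by decide), hΦ 0 2 (by decide),
    hΦ 0 3 (by decide), hΦ 1 2 (by decide), hΦ 1 3 (by decide), hΦ 2 3 (by decide)]
  abel

section

variable {ι R : Type*} [Ring R] {e : ι → R} {w x : ι → ι → R}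

def arnoldPotential (e : ι → R) (w : ι → ι → R) (p q : ι) : R :=
  e p * e q - 2 • ((e p - e q) * w p q)

theorem arnoldPotential_swap (he : ∀ p q, e p * e q = -(e q * e p))
    (hw : ∀ p q, p ≠ q → w p q = w q p) {p q : ι} (hpq : p ≠ q) :
    arnoldPotential e w q p = -arnoldPotential e w p q := by
  rw [arnoldPotential, arnoldPotential, hw q p hpq.symm, he q p]
  noncomm_ring

theorem cyclic_mul_sum_eq_arnoldPotential (he : ∀ p q, e p * e q = -(e q * e p))
    (he2 : ∀ p, e p * e p = 0) (hwe : ∀ p q r, q ≠ r → w q r * e p = -(e p * w q r))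
    (hArnold : ∀ p q r, p ≠ q → q ≠ r → p ≠ r →
      w p q * w q r + w q r * w r p + w r p * w p q = 0)
    (hx : ∀ p q, p ≠ q → x p q = e p + e q - 2 • w p q) {a b c : ι}
    (hab : a ≠ b) (hbc : b ≠ c) (hac : a ≠ c) :
    x a b * x b c + x b c * x c a + x c a * x a b =
      arnoldPotential e w a b + arnoldPotential e w b c + arnoldPotential e w c a := by
  rw [hx a b hab, hx b c hbc, hx c a hac.symm, arnoldPotential, arnoldPotential, arnoldPotential]
  linear_combination (norm := noncomm_ring) he b a + he c b + he a c + he2 a + he2 b + he2 c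
    - 2 * hwe b a b hab - 2 * hwe c a b hab - 2 * hwe c b c hbc - 2 * hwe a b c hbc
    - 2 * hwe a c a hac.symm - 2 * hwe b c a hac.symm + 4 * hArnold a b c hab hbc hac

theorem sum_even_perm_mul_eq_zero (he : ∀ p q, e p * e q = -(e q * e p))
    (he2 : ∀ p, e p * e p = 0) (hwe : ∀ p q r, q ≠ r → w q r * e p = -(e p * w q r))
    (hw : ∀ p q, p ≠ q → w p q = w q p)
    (hArnold : ∀ p q r, p ≠ q → q ≠ r → p ≠ r →
      w p q * w q r + w q r * w r p + w r p * w p q = 0)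
    (hx : ∀ p q, p ≠ q → x p q = e p + e q - 2 • w p q) {ind : Fin 4 → ι} (hind : Injective ind) :
    ∑ σ ∈ univ.filter (fun σ : Perm (Fin 4) => Perm.sign σ = 1),
      x (ind (σ 0)) (ind (σ 1)) * x (ind (σ 1)) (ind (σ 2)) = 0 :=
  sum_even_perm_fin_four_eq_zero (fun a b c => x (ind a) (ind b) * x (ind b) (ind c))
    (fun a b => arnoldPotential e w (ind a) (ind b))
    (fun _ _ hab => arnoldPotential_swap he hw (hind.ne hab))
    (fun _ _ _ hab hbc hac => cyclic_mul_sum_eq_arnoldPotential he he2 hwe hArnold hx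
      (hind.ne hab) (hind.ne hbc) (hind.ne hac))

end

theorem cyclic_arnold_relation_of_anticomm {R : Type*} [Ring R] {n : ℕ} {η : Fin n → R}
    {ω : Fin n → Fin n → R} {α : Fin (n + 1) → Fin (n + 1) → R}
    (hηη : ∀ i j, η i * η j = -(η j * η i)) (hη2 : ∀ i, η i * η i = 0)
    (hωη : ∀ i j k, j ≠ k → ω j k * η i = -(η i * ω j k))
    (hωsymm : ∀ i j, i ≠ j → ω i j = ω j i)
    (hArnold : ∀ i j k, i ≠ j → j ≠ k → i ≠ k →
      ω i j * ω j k + ω j k * ω k i + ω k i * ω i j = 0)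
    (hα0 : ∀ i, α 0 i.succ = η i ∧ α i.succ 0 = η i)
    (hαij : ∀ i j, i ≠ j → α i.succ j.succ = η i + η j - 2 • ω i j)
    {ind : Fin 4 → Fin (n + 1)} (hind : Injective ind) :
    ∑ σ ∈ univ.filter (fun σ : Perm (Fin 4) => Perm.sign σ = 1),
      α (ind (σ 0)) (ind (σ 1)) * α (ind (σ 1)) (ind (σ 2)) = 0 := by
  refine sum_even_perm_mul_eq_zero (e := Fin.cons 0 η)
    (w := Fin.cons 0 fun i => Fin.cons 0 (ω i)) ?_ ?_ ?_ ?_ ?_ ?_ hind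
  · intro p q
    cases p using Fin.cases <;> cases q using Fin.cases <;>
      simp only [Fin.cons_zero, Fin.cons_succ, zero_mul, mul_zero, neg_zero]
    exact hηη _ _
  · intro p
    cases p using Fin.cases <;> simp only [Fin.cons_zero, Fin.cons_succ, zero_mul]
    exact hη2 _
  · intro p q r hqr
    cases p using Fin.cases <;> cases q using Fin.cases <;> cases r using Fin.cases <;>
      simp only [Fin.cons_zero, Fin.cons_succ, zero_mul, mul_zero, neg_zero, Pi.zero_apply]
    exact hωη _ _ _ (ne_of_apply_ne Fin.succ hqr)
  · intro p q hpq
    cases p using Fin.cases <;> cases q using Fin.cases <;>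
      simp only [Fin.cons_zero, Fin.cons_succ, Pi.zero_apply]
    exact hωsymm _ _ (ne_of_apply_ne Fin.succ hpq)
  · intro p q r hpq hqr hpr
    cases p using Fin.cases <;> cases q using Fin.cases <;> cases r using Fin.cases <;>
      simp only [Fin.cons_zero, Fin.cons_succ, zero_mul, mul_zero, add_zero, Pi.zero_apply]
    exact hArnold _ _ _ (ne_of_apply_ne Fin.succ hpq) (ne_of_apply_ne Fin.succ hqr)
      (ne_of_apply_ne Fin.succ hpr)
  · intro p q hpq
    cases p using Fin.cases <;> cases q using Fin.cases <;>
      simp only [Fin.cons_zero, Fin.cons_succ, Pi.zero_apply, zero_add, add_zero, smul_zero,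
        sub_zero]
    · exact absurd rfl hpq
    · exact (hα0 _).1
    · exact (hα0 _).2
    · exact hαij _ _ (ne_of_apply_ne Fin.succ hpq)

theorem cyclic_arnold_relation_general
    (n : ℕ) (A : Type*) [Ring A]
    (η : Fin n → A) (ω : Fin n → Fin n → A)
    (hωsymm : ∀ i j : Fin n, i ≠ j → ω i j = ω j i)
    (hanti : ∀ x ∈ (Set.range η ∪ {a : A | ∃ i j : Fin n, i ≠ j ∧ a = ω i j}),
             ∀ y ∈ (Set.range η ∪ {a : A | ∃ i j : Fin n, i ≠ j ∧ a = ω i j}),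
             x * y = -(y * x))
    (hsq : ∀ x ∈ (Set.range η ∪ {a : A | ∃ i j : Fin n, i ≠ j ∧ a = ω i j}), x * x = 0)
    (hArnold : ∀ i j k : Fin n, i ≠ j → j ≠ k → i ≠ k →
        ω i j * ω j k + ω j k * ω k i + ω k i * ω i j = 0)
    (α : Fin (n + 1) → Fin (n + 1) → A)
    (hα0 : ∀ i : Fin n, α 0 i.succ = η i ∧ α i.succ 0 = η i)
    (hαij : ∀ i j : Fin n, i ≠ j → α i.succ j.succ = η i + η j - 2 • ω i j)
    (ind : Fin 4 → Fin (n + 1)) (hind : Function.Injective ind) :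
    ∑ σ ∈ Finset.univ.filter (fun σ : Equiv.Perm (Fin 4) => Equiv.Perm.sign σ = 1),
      α (ind (σ 0)) (ind (σ 1)) * α (ind (σ 1)) (ind (σ 2)) = 0 := by
  have hη i : η i ∈ Set.range η ∪ {a : A | ∃ i j : Fin n, i ≠ j ∧ a = ω i j} := .inl ⟨i, rfl⟩
  have hω i j (hij : i ≠ j) : ω i j ∈ Set.range η ∪ {a : A | ∃ i j : Fin n, i ≠ j ∧ a = ω i j} :=
    .inr ⟨i, j, hij, rfl⟩
  exact cyclic_arnold_relation_of_anticomm (fun i j => hanti _ (hη i) _ (hη j))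
    (fun i => hsq _ (hη i)) (fun i j k hjk => hanti _ (hω j k hjk) _ (hη i)) hωsymm hArnold hα0
    hαij hind

/-- **Cyclic Arnold relations.**  Fix `n ≥ 3` and an associative unital `ℝ`-algebra `A`
containing elements `η i` (`1 ≤ i ≤ n`, encoded as `i : Fin n`) and `ω i j = ω j i`
(`i ≠ j`) such that any two members of the family `{η i} ∪ {ω i j}` anticommute and each
squares to zero, and satisfying the Arnold relations.  Define
`α 0 (i+1) = α (i+1) 0 = η i` and `α (i+1) (j+1) = η i + η j - 2 ω i j`.  Then for every
4-tuple of distinct indices `ind : Fin 4 → Fin (n+1)` the cyclic Arnold relation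
`∑_{σ ∈ A₄} α (ind σ(1)) (ind σ(2)) * α (ind σ(2)) (ind σ(3)) = 0` holds, where the sum
runs over the alternating group on four letters (permutations of sign `1`). -/
theorem cyclic_arnold_relation
    (n : ℕ) (hn : 3 ≤ n) (A : Type*) [Ring A] [Algebra ℝ A]
    (η : Fin n → A) (ω : Fin n → Fin n → A)
    (hωsymm : ∀ i j : Fin n, i ≠ j → ω i j = ω j i)
    (hanti : ∀ x ∈ (Set.range η ∪ {a : A | ∃ i j : Fin n, i ≠ j ∧ a = ω i j}),
             ∀ y ∈ (Set.range η ∪ {a : A | ∃ i j : Fin n, i ≠ j ∧ a = ω i j}),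
             x * y = -(y * x))
    (hsq : ∀ x ∈ (Set.range η ∪ {a : A | ∃ i j : Fin n, i ≠ j ∧ a = ω i j}), x * x = 0)
    (hArnold : ∀ i j k : Fin n, i ≠ j → j ≠ k → i ≠ k →
        ω i j * ω j k + ω j k * ω k i + ω k i * ω i j = 0)
    (α : Fin (n + 1) → Fin (n + 1) → A)
    (hα0 : ∀ i : Fin n, α 0 i.succ = η i ∧ α i.succ 0 = η i)
    (hαij : ∀ i j : Fin n, i ≠ j → α i.succ j.succ = η i + η j - 2 • ω i j)
    (ind : Fin 4 → Fin (n + 1)) (hind : Function.Injective ind) :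
    ∑ σ ∈ Finset.univ.filter (fun σ : Equiv.Perm (Fin 4) => Equiv.Perm.sign σ = 1),
      α (ind (σ 0)) (ind (σ 1)) * α (ind (σ 1)) (ind (σ 2)) = 0 :=
  cyclic_arnold_relation_general n A η ω hωsymm hanti hsq hArnold α hα0 hαij ind hind
end

section
/- For every triple of distinct indices i, j, k ∈ {1, …, n}, the Arnold relation rewritten in terms of the α classes holds: α_{ij}α_{jk} + α_{jk}α_{ki} + α_{ki}α_{ij} + α_{i0}α_{0j} + α_{j0}α_{0k} + α_{k0}α_{0i} + α_{kj}α_{j0} + α_{ik}α_{k0} + α_{ji}α_{i0} + α_{0j}α_{ji} + α_{0k}α_{kj} + α_{0i}α_{ik} = 0. -/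
/-!
Write `x = a + b - 2u`, `y = b + c - 2v`, `z = c + a - 2w` for the three cyclic generators
`α_{ij}, α_{jk}, α_{ki}`, with `a, b, c` the `η`'s and `u, v, w` the `ω`'s. Expanding with the
anticommutation rules, the cyclic sum `xy + yz + zx` equals
`ab + bc + ca - 2((a - b)u + (b - c)v + (c - a)w) + 4(uv + vw + wu)`, while each mixed pair such
as `xa + bx` contributes `2((a - b)u - ab)`. Adding the standard terms `ab + bc + ca`, everything
cancels except `4(uv + vw + wu)`, which vanishes by the Arnold relation.
-/

section ArnoldRing

variable {R : Type*} [Ring R] {a b c u v w : R}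

theorem cyclic_generator_mul_add_mul (ha : a * a = 0) (hb : b * b = 0)
    (hab : a * b = -(b * a)) (hau : a * u = -(u * a)) :
    (a + b - 2 • u) * a + b * (a + b - 2 • u) = 2 • ((a - b) * u - a * b) := by
  linear_combination (norm := noncomm_ring) ha + hb + 2 * hab - 2 * hau

theorem cyclic_generators_cyclic_sum (hsq : ∀ x ∈ ({a, b, c} : Set R), x * x = 0)
    (hanti : ∀ x ∈ ({a, b, c} : Set R), ∀ y ∈ ({a, b, c, u, v, w} : Set R), x * y = -(y * x)) :
    (a + b - 2 • u) * (b + c - 2 • v) + (b + c - 2 • v) * (c + a - 2 • w)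
      + (c + a - 2 • w) * (a + b - 2 • u)
      = a * b + b * c + c * a - 2 • ((a - b) * u + (b - c) * v + (c - a) * w)
        + 4 • (u * v + v * w + w * u) := by
  have ha := hsq a (by simp)
  have hb := hsq b (by simp)
  have hc := hsq c (by simp)
  have hab := hanti a (by simp) b (by simp)
  have hbc := hanti b (by simp) c (by simp)
  have hca := hanti c (by simp) a (by simp)
  have hav := hanti a (by simp) v (by simp)
  have haw := hanti a (by simp) w (by simp)
  have hbu := hanti b (by simp) u (by simp)
  have hbw := hanti b (by simp) w (by simp)
  have hcu := hanti c (by simp) u (by simp)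
  have hcv := hanti c (by simp) v (by simp)
  linear_combination (norm := noncomm_ring)
    ha + hb + hc + hab + hbc + hca - 2 * (hav + haw + hbu + hbw + hcu + hcv)

theorem cyclic_generators_arnold_relation (hsq : ∀ x ∈ ({a, b, c} : Set R), x * x = 0)
    (hanti : ∀ x ∈ ({a, b, c} : Set R), ∀ y ∈ ({a, b, c, u, v, w} : Set R), x * y = -(y * x))
    (hArnold : u * v + v * w + w * u = 0) :
      (a + b - 2 • u) * (b + c - 2 • v) + (b + c - 2 • v) * (c + a - 2 • w)
    + (c + a - 2 • w) * (a + b - 2 • u)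
    + a * b + b * c + c * a
    + (b + c - 2 • v) * b + (c + a - 2 • w) * c + (a + b - 2 • u) * a
    + b * (a + b - 2 • u) + c * (b + c - 2 • v) + a * (c + a - 2 • w) = 0 := by
  have ha := hsq a (by simp)
  have hb := hsq b (by simp)
  have hc := hsq c (by simp)
  have hpair_ab := cyclic_generator_mul_add_mul ha hb
    (hanti a (by simp) b (by simp)) (hanti a (by simp) u (by simp))
  have hpair_bc := cyclic_generator_mul_add_mul hb hc
    (hanti b (by simp) c (by simp)) (hanti b (by simp) v (by simp))
  have hpair_ca := cyclic_generator_mul_add_mul hc ha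
    (hanti c (by simp) a (by simp)) (hanti c (by simp) w (by simp))
  linear_combination (norm := noncomm_ring)
    cyclic_generators_cyclic_sum hsq hanti + hpair_ab + hpair_bc + hpair_ca + 4 * hArnold

end ArnoldRing

theorem arnold_relation_in_cyclic_generators_general
    (n : ℕ) (A : Type*) [Ring A]
    (η : Fin n → A) (ω : Fin n → Fin n → A)
    (hωsymm : ∀ i j : Fin n, i ≠ j → ω i j = ω j i)
    (hanti : ∀ x ∈ (Set.range η ∪ {a : A | ∃ i j : Fin n, i ≠ j ∧ a = ω i j}),
             ∀ y ∈ (Set.range η ∪ {a : A | ∃ i j : Fin n, i ≠ j ∧ a = ω i j}),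
             x * y = -(y * x))
    (hsq : ∀ x ∈ (Set.range η ∪ {a : A | ∃ i j : Fin n, i ≠ j ∧ a = ω i j}), x * x = 0)
    (hArnold : ∀ i j k : Fin n, i ≠ j → j ≠ k → i ≠ k →
        ω i j * ω j k + ω j k * ω k i + ω k i * ω i j = 0)
    (α : Fin (n + 1) → Fin (n + 1) → A)
    (hα0 : ∀ i : Fin n, α 0 i.succ = η i ∧ α i.succ 0 = η i)
    (hαij : ∀ i j : Fin n, i ≠ j → α i.succ j.succ = η i + η j - 2 • ω i j)
    (i j k : Fin n) (hij : i ≠ j) (hjk : j ≠ k) (hik : i ≠ k) :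
      α i.succ j.succ * α j.succ k.succ
    + α j.succ k.succ * α k.succ i.succ
    + α k.succ i.succ * α i.succ j.succ
    + α i.succ 0 * α 0 j.succ
    + α j.succ 0 * α 0 k.succ
    + α k.succ 0 * α 0 i.succ
    + α k.succ j.succ * α j.succ 0
    + α i.succ k.succ * α k.succ 0
    + α j.succ i.succ * α i.succ 0
    + α 0 j.succ * α j.succ i.succ
    + α 0 k.succ * α k.succ j.succ
    + α 0 i.succ * α i.succ k.succ = 0 := by
  set S := Set.range η ∪ {a : A | ∃ i j : Fin n, i ≠ j ∧ a = ω i j}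
  have hmem : ∀ y ∈ ({η i, η j, η k, ω i j, ω j k, ω k i} : Set A), y ∈ S := by
    rintro y (rfl | rfl | rfl | rfl | rfl | rfl)
    exacts [Or.inl ⟨i, rfl⟩, Or.inl ⟨j, rfl⟩, Or.inl ⟨k, rfl⟩, Or.inr ⟨i, j, hij, rfl⟩,
      Or.inr ⟨j, k, hjk, rfl⟩, Or.inr ⟨k, i, hik.symm, rfl⟩]
  have hsub : ({η i, η j, η k} : Set A) ⊆ {η i, η j, η k, ω i j, ω j k, ω k i} := by
    simp [Set.insert_subset_iff]
  have hα_symm : ∀ p q : Fin n, p ≠ q → α q.succ p.succ = α p.succ q.succ := by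
    intro p q hpq
    rw [hαij q p hpq.symm, hαij p q hpq, hωsymm q p hpq.symm, add_comm (η q)]
  rw [hα_symm i j hij, hα_symm j k hjk, hα_symm k i hik.symm, hαij i j hij, hαij j k hjk,
    hαij k i hik.symm, (hα0 i).1, (hα0 i).2, (hα0 j).1, (hα0 j).2, (hα0 k).1, (hα0 k).2]
  exact cyclic_generators_arnold_relation (fun x hx => hsq x (hmem x (hsub hx)))
    (fun x hx y hy => hanti x (hmem x (hsub hx)) y (hmem y hy)) (hArnold i j k hij hjk hik)

/-- **The Arnold relation rewritten in the cyclic generators.**  Fix `n ≥ 3` and an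
associative unital `ℝ`-algebra `A` containing elements `η i` (`1 ≤ i ≤ n`, encoded as
`i : Fin n`) and `ω i j = ω j i` (`i ≠ j`) such that any two members of the family
`{η i} ∪ {ω i j}` anticommute and each squares to zero, and satisfying the Arnold
relations.  Define `α 0 (i+1) = α (i+1) 0 = η i` and `α (i+1) (j+1) = η i + η j - 2 ω i j`
(the cyclic generators of `H^*(𝓜_{n+1};ℝ)`).  Then for every triple of distinct indices
`i, j, k` one has
`α_{ij}α_{jk} + α_{jk}α_{ki} + α_{ki}α_{ij} + α_{i0}α_{0j} + α_{j0}α_{0k} + α_{k0}α_{0i}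
 + α_{kj}α_{j0} + α_{ik}α_{k0} + α_{ji}α_{i0} + α_{0j}α_{ji} + α_{0k}α_{kj} + α_{0i}α_{ik} = 0`. -/
theorem arnold_relation_in_cyclic_generators
    (n : ℕ) (hn : 3 ≤ n) (A : Type*) [Ring A] [Algebra ℝ A]
    (η : Fin n → A) (ω : Fin n → Fin n → A)
    (hωsymm : ∀ i j : Fin n, i ≠ j → ω i j = ω j i)
    (hanti : ∀ x ∈ (Set.range η ∪ {a : A | ∃ i j : Fin n, i ≠ j ∧ a = ω i j}),
             ∀ y ∈ (Set.range η ∪ {a : A | ∃ i j : Fin n, i ≠ j ∧ a = ω i j}),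
             x * y = -(y * x))
    (hsq : ∀ x ∈ (Set.range η ∪ {a : A | ∃ i j : Fin n, i ≠ j ∧ a = ω i j}), x * x = 0)
    (hArnold : ∀ i j k : Fin n, i ≠ j → j ≠ k → i ≠ k →
        ω i j * ω j k + ω j k * ω k i + ω k i * ω i j = 0)
    (α : Fin (n + 1) → Fin (n + 1) → A)
    (hα0 : ∀ i : Fin n, α 0 i.succ = η i ∧ α i.succ 0 = η i)
    (hαij : ∀ i j : Fin n, i ≠ j → α i.succ j.succ = η i + η j - 2 • ω i j)
    (i j k : Fin n) (hij : i ≠ j) (hjk : j ≠ k) (hik : i ≠ k) :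
      α i.succ j.succ * α j.succ k.succ
    + α j.succ k.succ * α k.succ i.succ
    + α k.succ i.succ * α i.succ j.succ
    + α i.succ 0 * α 0 j.succ
    + α j.succ 0 * α 0 k.succ
    + α k.succ 0 * α 0 i.succ
    + α k.succ j.succ * α j.succ 0
    + α i.succ k.succ * α k.succ 0
    + α j.succ i.succ * α i.succ 0
    + α 0 j.succ * α j.succ i.succ
    + α 0 k.succ * α k.succ j.succ
    + α 0 i.succ * α i.succ k.succ = 0 :=
  arnold_relation_in_cyclic_generators_general n A η ω hωsymm hanti hsq hArnold α hα0 hαij i j k hij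
    hjk hik
end

section
/- For every triple of distinct indices i, j, k ∈ {1, …, n}, the elements ω_{ij} satisfy the Arnold relation: ω_{ij}·ω_{jk} + ω_{jk}·ω_{ki} + ω_{ki}·ω_{ij} = 0. -/
/-!
Put `γ q r = α 0 q + α 0 r - α q r = 2 ω q r`. Expanding the Arnold sum of
`γ i j, γ j k, γ k i` with the anticommutation relations leaves minus the sum, over the four
oriented faces `(p, q, r)` of the tetrahedron `0 i j k`, of
`α p q α q r + α q r α r p + α r p α p q`. That face sum is the cyclic Arnold relation of the
4-tuple `(0, i, j, k)`: the three even permutations `σ` of `Fin 4` with the same omitted vertex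
`σ 3` are the rotations of one oriented face.
-/

def arnoldSum {R : Type*} [Mul R] [Add R] (x y z : R) : R := x * y + y * z + z * x

theorem arnoldSum_smul {R A : Type*} [CommSemiring R] [NonUnitalNonAssocSemiring A] [Module R A]
    [IsScalarTower R A A] [SMulCommClass R A A] (c : R) (x y z : A) :
    arnoldSum (c • x) (c • y) (c • z) = (c * c) • arnoldSum x y z := by
  simp only [arnoldSum, smul_mul_smul_comm, smul_add]

theorem sum_even_perm_fin_four_eq_faces {R : Type*} [NonUnitalNonAssocSemiring R]
    (β : Fin 4 → Fin 4 → R) :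
    ∑ σ ∈ Finset.univ.filter (fun σ : Equiv.Perm (Fin 4) => Equiv.Perm.sign σ = 1),
        β (σ 0) (σ 1) * β (σ 1) (σ 2) =
      arnoldSum (β 0 1) (β 1 2) (β 2 0) + arnoldSum (β 0 2) (β 2 3) (β 3 0) +
        arnoldSum (β 0 3) (β 3 1) (β 1 0) + arnoldSum (β 1 3) (β 3 2) (β 2 1) := by
  let perm (v : Fin 4 → Fin 4) (hv : v.Bijective) : Equiv.Perm (Fin 4) := Equiv.ofBijective v hv
  have hA₄ : Finset.univ.filter (fun σ : Equiv.Perm (Fin 4) => Equiv.Perm.sign σ = 1) =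
      {perm ![0, 1, 2, 3] (by decide), perm ![1, 2, 0, 3] (by decide),
       perm ![2, 0, 1, 3] (by decide), perm ![0, 2, 3, 1] (by decide),
       perm ![2, 3, 0, 1] (by decide), perm ![3, 0, 2, 1] (by decide),
       perm ![0, 3, 1, 2] (by decide), perm ![3, 1, 0, 2] (by decide),
       perm ![1, 0, 3, 2] (by decide), perm ![1, 3, 2, 0] (by decide),
       perm ![3, 2, 1, 0] (by decide), perm ![2, 1, 3, 0] (by decide)} := by
    decide
  rw [hA₄]
  repeat rw [Finset.sum_insert (by decide)]
  simp only [perm, Equiv.ofBijective_apply, Matrix.cons_val_zero, Matrix.cons_val_one,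
    Matrix.cons_val, Finset.sum_singleton, arnoldSum]
  abel

theorem arnoldSum_eq_neg_tetrahedron {R : Type*} [Ring R] {S : Set R}
    (hanti : ∀ x ∈ S, ∀ y ∈ S, x * y = -(y * x)) (hsq : ∀ x ∈ S, x * x = 0)
    {a b c d e f : R} (ha : a ∈ S) (hb : b ∈ S) (hc : c ∈ S) (hd : d ∈ S) (he : e ∈ S)
    (hf : f ∈ S) :
    arnoldSum (a + b - d) (b + c - e) (c + a - f) =
      -(arnoldSum a d b + arnoldSum b e c + arnoldSum c f a + arnoldSum f e d) := by
  have hzero : ∀ x ∈ S, ∀ y ∈ S, x * y + y * x = 0 := fun x hx y hy => by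
    rw [hanti x hx y hy, neg_add_cancel]
  have key : arnoldSum (a + b - d) (b + c - e) (c + a - f) +
      (arnoldSum a d b + arnoldSum b e c + arnoldSum c f a + arnoldSum f e d) =
      a * a + b * b + c * c + 2 * (a * b + b * a) + 2 * (a * c + c * a) + 2 * (b * c + c * b)
        - (a * e + e * a) - (b * f + f * b) - (c * d + d * c)
        + (d * e + e * d) + (e * f + f * e) + (d * f + f * d) := by
    simp only [arnoldSum]
    noncomm_ring
  rw [hsq a ha, hsq b hb, hsq c hc, hzero a ha b hb, hzero a ha c hc, hzero b hb c hc,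
    hzero a ha e he, hzero b hb f hf, hzero c hc d hd, hzero d hd e he, hzero e he f hf,
    hzero d hd f hf] at key
  exact eq_neg_of_add_eq_zero_left (by simpa using key)

theorem arnold_relation_from_cyclic_general
    (n : ℕ) (A : Type*) [Ring A] [Algebra ℝ A]
    (α : Fin (n + 1) → Fin (n + 1) → A)
    (hαsymm : ∀ i j : Fin (n + 1), i ≠ j → α i j = α j i)
    (hanti : ∀ x ∈ {a : A | ∃ i j : Fin (n + 1), i ≠ j ∧ a = α i j},
             ∀ y ∈ {a : A | ∃ i j : Fin (n + 1), i ≠ j ∧ a = α i j},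
             x * y = -(y * x))
    (hsq : ∀ x ∈ {a : A | ∃ i j : Fin (n + 1), i ≠ j ∧ a = α i j}, x * x = 0)
    (hcyc : ∀ ind : Fin 4 → Fin (n + 1), Function.Injective ind →
        ∑ σ ∈ Finset.univ.filter (fun σ : Equiv.Perm (Fin 4) => Equiv.Perm.sign σ = 1),
          α (ind (σ 0)) (ind (σ 1)) * α (ind (σ 1)) (ind (σ 2)) = 0)
    (ω : Fin (n + 1) → Fin (n + 1) → A)
    (hω : ∀ i j : Fin (n + 1), i ≠ 0 → j ≠ 0 → i ≠ j →
        ω i j = (1 / 2 : ℝ) • (α 0 i + α 0 j - α i j))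
    (i j k : Fin (n + 1)) (hi : i ≠ 0) (hj : j ≠ 0) (hk : k ≠ 0)
    (hij : i ≠ j) (hjk : j ≠ k) (hik : i ≠ k) :
    ω i j * ω j k + ω j k * ω k i + ω k i * ω i j = 0 := by
  have hinj : Function.Injective ![0, i, j, k] := by
    simp only [Matrix.vecCons, Fin.cons_injective_iff, Set.mem_range, Fin.exists_fin_succ]
    simp [Function.injective_of_subsingleton, hi, hj, hk, hij.symm, hik.symm, hjk.symm]
  have hfaces :=
    (sum_even_perm_fin_four_eq_faces fun p q => α (![0, i, j, k] p) (![0, i, j, k] q)).symm.trans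
      (hcyc _ hinj)
  simp only [Matrix.cons_val] at hfaces
  rw [hαsymm j 0 hj, hαsymm k 0 hk, hαsymm i 0 hi, hαsymm i k hik, hαsymm k j hjk.symm,
    hαsymm j i hij.symm] at hfaces
  have hγ := arnoldSum_eq_neg_tetrahedron hanti hsq ⟨0, i, hi.symm, rfl⟩ ⟨0, j, hj.symm, rfl⟩
    ⟨0, k, hk.symm, rfl⟩ ⟨i, j, hij, rfl⟩ ⟨j, k, hjk, rfl⟩ ⟨k, i, hik.symm, rfl⟩
  rw [hfaces, neg_zero] at hγ
  show arnoldSum (ω i j) (ω j k) (ω k i) = 0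
  rw [hω i j hi hj hij, hω j k hj hk hjk, hω k i hk hi hik.symm, arnoldSum_smul, hγ, smul_zero]

/-- **The Arnold relation follows from the cyclic Arnold relations.**  Fix `n ≥ 3` and an
associative unital `ℝ`-algebra `A` containing elements `α i j = α j i`
(`0 ≤ i ≠ j ≤ n`, encoded by `i j : Fin (n+1)`) such that any two of them anticommute and
each squares to zero, and satisfying the cyclic Arnold relations: for every 4-tuple of
distinct indices `ind : Fin 4 → Fin (n+1)`,
`∑_{σ ∈ A₄} α (ind σ(1)) (ind σ(2)) * α (ind σ(2)) (ind σ(3)) = 0`, the sum being over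
the alternating group on four letters (permutations of sign `1`).  Define
`ω i j = (1/2)(α 0 i + α 0 j - α i j)` for nonzero `i ≠ j`.  Then the `ω i j` satisfy the
Arnold relation `ω i j * ω j k + ω j k * ω k i + ω k i * ω i j = 0` for all triples of
distinct nonzero indices. -/
theorem arnold_relation_from_cyclic
    (n : ℕ) (hn : 3 ≤ n) (A : Type*) [Ring A] [Algebra ℝ A]
    (α : Fin (n + 1) → Fin (n + 1) → A)
    (hαsymm : ∀ i j : Fin (n + 1), i ≠ j → α i j = α j i)
    (hanti : ∀ x ∈ {a : A | ∃ i j : Fin (n + 1), i ≠ j ∧ a = α i j},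
             ∀ y ∈ {a : A | ∃ i j : Fin (n + 1), i ≠ j ∧ a = α i j},
             x * y = -(y * x))
    (hsq : ∀ x ∈ {a : A | ∃ i j : Fin (n + 1), i ≠ j ∧ a = α i j}, x * x = 0)
    (hcyc : ∀ ind : Fin 4 → Fin (n + 1), Function.Injective ind →
        ∑ σ ∈ Finset.univ.filter (fun σ : Equiv.Perm (Fin 4) => Equiv.Perm.sign σ = 1),
          α (ind (σ 0)) (ind (σ 1)) * α (ind (σ 1)) (ind (σ 2)) = 0)
    (ω : Fin (n + 1) → Fin (n + 1) → A)
    (hω : ∀ i j : Fin (n + 1), i ≠ 0 → j ≠ 0 → i ≠ j →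
        ω i j = (1 / 2 : ℝ) • (α 0 i + α 0 j - α i j))
    (i j k : Fin (n + 1)) (hi : i ≠ 0) (hj : j ≠ 0) (hk : k ≠ 0)
    (hij : i ≠ j) (hjk : j ≠ k) (hik : i ≠ k) :
    ω i j * ω j k + ω j k * ω k i + ω k i * ω i j = 0 :=
  arnold_relation_from_cyclic_general n A α hαsymm hanti hsq hcyc ω hω i j k hi hj hk hij hjk hik
end

section
/- For every k ≥ 0: Σ_{i=0}^{k} (−1)^i Π_{j≠i} (x + z_j) = Σ_{i=0}^{k} (−1)^i Π_{j≠i} z_j, where Π_{j≠i} denotes the product over j ∈ {0, …, k} ∖ {i} taken in increasing order of j. Equivalently, the coefficient of x in the left-hand side vanishes. -/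
/-!
Write `S(l) = ∑ᵢ (-1)ⁱ ∏_{j ≠ i} lⱼ`. If `x² = 0` and `x` anticommutes with every entry of `l`,
then moving `x` to the front of a word costs the sign of the number of letters it crosses, and
words with two `x`s vanish, so `∏ (x + lⱼ) = ∏ lⱼ + x · S(l)`. Since
`S(l ++ [a]) = S(l) · a ± ∏ lⱼ`, an induction on `l` shows that `S` is unchanged by adding `x`
to every entry: the two new `x`-terms `S(l) · x` and `± x · S(l)` cancel, because `S(l)` is a
sum of words of length `|l| - 1`.
-/

namespace List

variable {A : Type*} [Ring A]

def altSumProdEraseIdx (l : List A) : A :=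
  ∑ i ∈ Finset.range l.length, ((-1 : ℤ) ^ i) • (l.eraseIdx i).prod

theorem altSumProdEraseIdx_append_singleton (l : List A) (a : A) :
    altSumProdEraseIdx (l ++ [a]) =
      altSumProdEraseIdx l * a + ((-1 : ℤ) ^ l.length) • l.prod := by
  rw [altSumProdEraseIdx, length_append, length_singleton, Finset.sum_range_succ,
    altSumProdEraseIdx, Finset.sum_mul, eraseIdx_append_of_length_le le_rfl, Nat.sub_self,
    eraseIdx_cons_zero, append_nil]
  congr 1
  refine Finset.sum_congr rfl fun i hi => ?_
  rw [eraseIdx_append_of_lt_length (Finset.mem_range.mp hi), prod_append, prod_singleton,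
    smul_mul_assoc]

variable {x : A} {l : List A}

theorem prod_mul_eq_neg_one_pow_smul_mul_prod (hl : ∀ a ∈ l, a * x = -(x * a)) :
    l.prod * x = ((-1 : ℤ) ^ l.length) • (x * l.prod) := by
  induction l with
  | nil => simp
  | cons a l ih =>
    rw [prod_cons, mul_assoc, ih fun b hb => hl b (mem_cons_of_mem a hb), mul_smul_comm,
      ← mul_assoc, hl a mem_cons_self, length_cons, pow_succ, mul_smul, neg_one_smul, neg_mul,
      mul_assoc]

theorem altSumProdEraseIdx_mul (hl : ∀ a ∈ l, a * x = -(x * a)) :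
    altSumProdEraseIdx l * x = ((-1 : ℤ) ^ (l.length + 1)) • (x * altSumProdEraseIdx l) := by
  rw [altSumProdEraseIdx, Finset.sum_mul, Finset.mul_sum, Finset.smul_sum]
  refine Finset.sum_congr rfl fun i hi => ?_
  have hlen : (l.eraseIdx i).length + 2 = l.length + 1 := by
    have hi : i < l.length := Finset.mem_range.mp hi
    rw [length_eraseIdx_of_lt hi]
    omega
  have hsign : ((-1 : ℤ) ^ (l.eraseIdx i).length) = (-1) ^ (l.length + 1) := by
    rw [← hlen, pow_add, neg_one_sq, mul_one]
  rw [smul_mul_assoc, prod_mul_eq_neg_one_pow_smul_mul_prod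
    fun a ha => hl a (mem_of_mem_eraseIdx ha), hsign, mul_smul_comm, smul_comm]

theorem prod_map_add (hx : x * x = 0) (hl : ∀ a ∈ l, a * x = -(x * a)) :
    (l.map (x + ·)).prod = l.prod + x * altSumProdEraseIdx l := by
  induction l using reverseRecOn with
  | nil => simp [altSumProdEraseIdx]
  | append_singleton l a ih =>
    have hl' : ∀ b ∈ l, b * x = -(x * b) := fun b hb => hl b (mem_append_left _ hb)
    have hxSx : x * altSumProdEraseIdx l * x = 0 := by
      rw [mul_assoc, altSumProdEraseIdx_mul hl', mul_smul_comm, ← mul_assoc, hx, zero_mul,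
        smul_zero]
    rw [map_append, map_singleton, prod_append, prod_singleton, ih hl',
      altSumProdEraseIdx_append_singleton, prod_append, prod_singleton, add_mul, mul_add,
      mul_add, prod_mul_eq_neg_one_pow_smul_mul_prod hl', hxSx, mul_add, mul_smul_comm,
      ← mul_assoc]
    abel

theorem altSumProdEraseIdx_map_add (hx : x * x = 0) (hl : ∀ a ∈ l, a * x = -(x * a)) :
    altSumProdEraseIdx (l.map (x + ·)) = altSumProdEraseIdx l := by
  induction l using reverseRecOn with
  | nil => rfl
  | append_singleton l a ih =>
    have hl' : ∀ b ∈ l, b * x = -(x * b) := fun b hb => hl b (mem_append_left _ hb)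
    rw [map_append, map_singleton, altSumProdEraseIdx_append_singleton,
      altSumProdEraseIdx_append_singleton, ih hl', length_map, prod_map_add hx hl', mul_add,
      smul_add, altSumProdEraseIdx_mul hl', pow_succ, mul_neg_one, neg_smul]
    abel

end List

/-- **Vanishing of the coefficient of `x` in the alternating pinwheel sum.**  Let `A` be an
associative unital `ℝ`-algebra and let `x, z_0, …, z_k ∈ A` be elements such that any two
of them anticommute (`u*v = -(v*u)`) and each squares to zero.  Then for every `k ≥ 0`:
`∑_{i=0}^k (-1)^i ∏_{j ≠ i} (x + z_j) = ∑_{i=0}^k (-1)^i ∏_{j ≠ i} z_j`,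
where `∏_{j ≠ i}` is the product over `j ∈ {0, …, k} ∖ {i}` taken in increasing order of
`j`; equivalently, the coefficient of `x` on the left-hand side vanishes.  (This is the
algebraic identity underlying the proof that the pinwheel ideal lies in the kernel of the
Kontsevich integral.) -/
theorem pinwheel_coefficient_vanishes
    (A : Type*) [Ring A] [Algebra ℝ A] (k : ℕ) (x : A) (z : Fin (k + 1) → A)
    (hanti : ∀ u ∈ insert x (Set.range z), ∀ v ∈ insert x (Set.range z),
        u * v = -(v * u))
    (hsq : ∀ u ∈ insert x (Set.range z), u * u = 0) :
    ∑ i : Fin (k + 1), ((-1 : ℝ) ^ (i : ℕ)) •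
        ((List.ofFn (fun j : Fin (k + 1) => x + z j)).eraseIdx i).prod
      = ∑ i : Fin (k + 1), ((-1 : ℝ) ^ (i : ℕ)) • ((List.ofFn z).eraseIdx i).prod := by
  have sum_eq (w : Fin (k + 1) → A) :
      ∑ i : Fin (k + 1), ((-1 : ℝ) ^ (i : ℕ)) • ((List.ofFn w).eraseIdx i).prod =
        (List.ofFn w).altSumProdEraseIdx := by
    rw [List.altSumProdEraseIdx, List.length_ofFn,
      ← Fin.sum_univ_eq_sum_range (fun i => ((-1 : ℤ) ^ i) • ((List.ofFn w).eraseIdx i).prod)]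
    refine Finset.sum_congr rfl fun i _ => ?_
    rw [← Int.cast_smul_eq_zsmul ℝ]
    push_cast
    rfl
  have hz : ∀ a ∈ List.ofFn z, a * x = -(x * a) := by
    intro a ha
    exact hanti a (Set.mem_insert_of_mem _ (List.mem_ofFn.mp ha)) x (Set.mem_insert _ _)
  rw [sum_eq, sum_eq, ← List.altSumProdEraseIdx_map_add (hsq x (Set.mem_insert _ _)) hz,
    List.map_ofFn]
  rfl
end

section
/- A_a·A_b·A_c·e = (1/4)·(B_a B_b − B_a B_c + B_b B_c)·(A_a e + A_b e + 2 A_c e). -/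
/-!
Write `B_x = A_x + d` with `d = B_a - A_a`. Since `d` squares to zero and anticommutes with `A_b`,
the quadratic factor is unchanged when every `B_x` is replaced by `A_x`. Multiplying
`A_a A_b - A_a A_c + A_b A_c` by `A_a + A_b + 2 A_c` in the exterior algebra on `A_a, A_b, A_c`
leaves `2 A_a A_b A_c + A_a A_b A_c + A_a A_b A_c`; the factor `e` only rides along on the right.
-/

section Anticommuting

variable {R : Type*} [Ring R]

theorem mul_mul_eq_neg_mul_mul_of_anticomm {x y : R} (h : y * x = -(x * y)) (t : R) :
    y * (x * t) = -(x * (y * t)) := by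
  rw [← mul_assoc, h, neg_mul, mul_assoc]

theorem mul_mul_eq_zero_of_mul_self_eq_zero {x : R} (h : x * x = 0) (t : R) :
    x * (x * t) = 0 := by
  rw [← mul_assoc, h, zero_mul]

theorem sub_mul_sub_self_eq_zero_of_anticomm {x y : R} (hx : x * x = 0) (hy : y * y = 0)
    (hxy : x * y = -(y * x)) : (x - y) * (x - y) = 0 := by
  rw [sub_mul, mul_sub, mul_sub, hx, hy, hxy]
  abel

theorem sub_mul_eq_neg_mul_sub_of_anticomm {x y z : R} (hx : x * z = -(z * x))
    (hy : y * z = -(z * y)) : (x - y) * z = -(z * (x - y)) := by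
  rw [sub_mul, mul_sub, hx, hy]
  abel

/-- For anticommuting `a, b, c` this is `ab + bc + ca`, the cyclic Arnold expression. -/
def cyclicArnold (a b c : R) : R :=
  a * b - a * c + b * c

theorem cyclicArnold_add_of_anticomm {a b c d : R} (hd : d * d = 0) (hdb : d * b = -(b * d)) :
    cyclicArnold (a + d) (b + d) (c + d) = cyclicArnold a b c := by
  have expand : cyclicArnold (a + d) (b + d) (c + d)
      = cyclicArnold a b c + (d * b + b * d) + d * d := by
    unfold cyclicArnold
    noncomm_ring
  rw [expand, hd, hdb]
  abel

theorem cyclicArnold_mul_add_add_two_mul {a b c : R} (ha : a * a = 0) (hb : b * b = 0)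
    (hc : c * c = 0) (hba : b * a = -(a * b)) (hca : c * a = -(a * c))
    (hcb : c * b = -(b * c)) :
    cyclicArnold a b c * (a + b + 2 * c) = 4 * (a * (b * c)) := by
  rw [cyclicArnold, two_mul]
  simp only [sub_mul, add_mul, mul_add, mul_assoc]
  simp only [mul_mul_eq_neg_mul_mul_of_anticomm hba, mul_mul_eq_zero_of_mul_self_eq_zero ha,
    mul_mul_eq_zero_of_mul_self_eq_zero hb, hba, hca, hcb, hb, hc,
    mul_neg, neg_neg, mul_zero, neg_zero]
  noncomm_ring

end Anticommuting

theorem plus_graph_boundary_identity_general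
    (A : Type*) [Ring A] [Algebra ℝ A] (Aa Ab Ac Ba Bb Bc e : A)
    (hanti : ∀ x ∈ ({Aa, Ab, Ac, Ba, Bb, Bc, e} : Set A),
             ∀ y ∈ ({Aa, Ab, Ac, Ba, Bb, Bc, e} : Set A), x * y = -(y * x))
    (hsq : ∀ x ∈ ({Aa, Ab, Ac, Ba, Bb, Bc, e} : Set A), x * x = 0)
    (hab : Aa - Ab = Ba - Bb) (hac : Aa - Ac = Ba - Bc) :
    Aa * Ab * Ac * e
      = (1 / 4 : ℝ) •
          ((Ba * Bb - Ba * Bc + Bb * Bc) * (Aa * e + Ab * e + (2 : ℝ) • (Ac * e))) := by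
  set d := Ba - Aa with hd
  have hBa : Ba = Aa + d := by rw [hd]; abel
  have hBb : Bb = Ab + d := by rw [hd]; linear_combination (norm := abel) hab
  have hBc : Bc = Ac + d := by rw [hd]; linear_combination (norm := abel) hac
  have hdd : d * d = 0 := sub_mul_sub_self_eq_zero_of_anticomm (hsq Ba (by simp))
    (hsq Aa (by simp)) (hanti Ba (by simp) Aa (by simp))
  have hdAb : d * Ab = -(Ab * d) := sub_mul_eq_neg_mul_sub_of_anticomm
    (hanti Ba (by simp) Ab (by simp)) (hanti Aa (by simp) Ab (by simp))
  have hquad : cyclicArnold Ba Bb Bc = cyclicArnold Aa Ab Ac := by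
    rw [hBa, hBb, hBc]
    exact cyclicArnold_add_of_anticomm hdd hdAb
  have hcubic := cyclicArnold_mul_add_add_two_mul (hsq Aa (by simp)) (hsq Ab (by simp))
    (hsq Ac (by simp)) (hanti Ab (by simp) Aa (by simp)) (hanti Ac (by simp) Aa (by simp))
    (hanti Ac (by simp) Ab (by simp))
  have hlinear : Aa * e + Ab * e + (2 : ℝ) • (Ac * e) = (Aa + Ab + 2 * Ac) * e := by
    rw [two_smul, two_mul]
    noncomm_ring
  rw [show Ba * Bb - Ba * Bc + Bb * Bc = cyclicArnold Ba Bb Bc from rfl, hquad, hlinear,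
    ← mul_assoc, hcubic, mul_assoc (4 : A), ← map_ofNat (algebraMap ℝ A) 4, ← Algebra.smul_def,
    smul_smul]
  norm_num [mul_assoc]

/-- **The plus-graph boundary identity.**  Let `A` be an associative unital `ℝ`-algebra and
let `Aa, Ab, Ac, Ba, Bb, Bc, e ∈ A` be elements such that any two of them anticommute
(`x*y = -(y*x)`), each squares to zero, and `A_x - A_y = B_x - B_y` for all
`x, y ∈ {a, b, c}`.  Then
`Aa * Ab * Ac * e = (1/4) (Ba Bb - Ba Bc + Bb Bc) (Aa e + Ab e + 2 Ac e)`.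
(This encodes the identity
`α_{va}α_{vb}α_{vc}α_{dv} = (1/4)(α_{da}α_{db} - α_{da}α_{dc} + α_{db}α_{dc})
(α_{va}α_{dv} + α_{vb}α_{dv} + 2α_{vc}α_{dv})` of 1-forms on `∂_{dv}`, with
`A_x = α_{vx}`, `B_x = α_{dx}`, `e = α_{dv}`.) -/
theorem plus_graph_boundary_identity
    (A : Type*) [Ring A] [Algebra ℝ A] (Aa Ab Ac Ba Bb Bc e : A)
    (hanti : ∀ x ∈ ({Aa, Ab, Ac, Ba, Bb, Bc, e} : Set A),
             ∀ y ∈ ({Aa, Ab, Ac, Ba, Bb, Bc, e} : Set A), x * y = -(y * x))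
    (hsq : ∀ x ∈ ({Aa, Ab, Ac, Ba, Bb, Bc, e} : Set A), x * x = 0)
    (hab : Aa - Ab = Ba - Bb) (hac : Aa - Ac = Ba - Bc) (hbc : Ab - Ac = Bb - Bc) :
    Aa * Ab * Ac * e
      = (1 / 4 : ℝ) •
          ((Ba * Bb - Ba * Bc + Bb * Bc) * (Aa * e + Ab * e + (2 : ℝ) • (Ac * e))) :=
  plus_graph_boundary_identity_general A Aa Ab Ac Ba Bb Bc e hanti hsq hab hac
end
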